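/- Let F = A₁|…|A_k be a stable ordered set partition of [n] and let j ∈ [k−1]. If the ordered set partition F′ = A₁|…|A_{j−1}|A_{j+1}|A_j|A_{j+2}|…|A_k (obtained from F by transposing the adjacent blocks A_j and A_{j+1}) is stable and F is not equivalent to F′, then the ordered set partition F″ = A₁|…|A_{j−1}|(A_j ∪ A_{j+1})|A_{j+2}|…|A_k (obtained from F by merging the blocks A_j and A_{j+1}) is stable. -/

import Mathlib

/-!
Lattice congruences of the weak order on `S_n`, encoded via fences.

Permutations of `[n] = {1, …, n}` are modeled as lists of natural numbers (sequences of
values) that enumerate `Finset.Icc 1 n` without repetition.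
-/

/-- A fence, encoded by its defining triple `(a, b, L)`. -/
structure Fence where
  a : ℕ
  b : ℕ
  L : Finset ℕ

/-- The triple `(a, b, L)` is a valid fence datum for `[n]`:
`1 ≤ a < b ≤ n` and `L ⊆ ]a,b[`. -/
def Fence.Valid (n : ℕ) (f : Fence) : Prop :=
  1 ≤ f.a ∧ f.a < f.b ∧ f.b ≤ n ∧ f.L ⊆ Finset.Ioo f.a f.b

/-- The forcing order on fences: `f' ⪯ f` iff `f'.a ≤ f.a < f.b ≤ f'.b` and
`f'.L ∩ ]f.a, f.b[ = f.L`. -/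
def Fence.Forces (f' f : Fence) : Prop :=
  f'.a ≤ f.a ∧ f.b ≤ f'.b ∧ f'.L ∩ Finset.Ioo f.a f.b = f.L

/-- `𝓕` is a downset of the forcing order on valid fences for `[n]`. -/
def IsFenceDownset (n : ℕ) (𝓕 : Set Fence) : Prop :=
  (∀ f ∈ 𝓕, f.Valid n) ∧
  ∀ f ∈ 𝓕, ∀ f' : Fence, f'.Valid n → f'.Forces f → f' ∈ 𝓕

/-- The unordered pair `{π₁, π₂}` belongs to the fence `f = f(a, b, L)`: `π₂` is obtained
from `π₁` by transposing two adjacent entries equal to `a` and `b`, every element of `L`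
occurs to the left of those entries, and every element of `]a,b[ ∖ L` occurs to their
right. -/
def FenceRel (f : Fence) (π₁ π₂ : List ℕ) : Prop :=
  ∃ u w : List ℕ,
    ((π₁ = u ++ f.a :: f.b :: w ∧ π₂ = u ++ f.b :: f.a :: w) ∨
     (π₁ = u ++ f.b :: f.a :: w ∧ π₂ = u ++ f.a :: f.b :: w)) ∧
    (∀ x ∈ f.L, x ∈ u) ∧
    (∀ x ∈ Finset.Ioo f.a f.b, x ∉ f.L → x ∈ w)

/-- The equivalence relation `≡` on permutations generated by the pairs belonging to some
fence in `𝓕`. -/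
def PermEquiv (𝓕 : Set Fence) : List ℕ → List ℕ → Prop :=
  Relation.EqvGen (fun π₁ π₂ => ∃ f ∈ 𝓕, FenceRel f π₁ π₂)

/-- `l` is (the list of values of) a permutation of `[n]`. -/
def IsPermList (n : ℕ) (l : List ℕ) : Prop :=
  l.Nodup ∧ ∀ x : ℕ, x ∈ l ↔ x ∈ Finset.Icc 1 n

/-- The restriction `≡*` of `≡` to permutations of `[n−1]`:
`σ ≡* π` iff `σ·n ≡ π·n`. -/
def PermEquivStar (n : ℕ) (𝓕 : Set Fence) (σ π : List ℕ) : Prop :=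
  PermEquiv 𝓕 (σ ++ [n]) (π ++ [n])

/-- `P` is an ordered set partition with ground set `S`: a list of nonempty pairwise
disjoint finsets whose union is `S`. -/
def IsOSP (S : Finset ℕ) (P : List (Finset ℕ)) : Prop :=
  (∀ B ∈ P, B.Nonempty) ∧ P.Pairwise Disjoint ∧ ∀ x : ℕ, x ∈ S ↔ ∃ B ∈ P, x ∈ B

/-- `l` is one of the permutations identified with the ordered set partition `P`: a
concatenation of enumerations of the blocks of `P`, in order. -/
def Linearizes (l : List ℕ) (P : List (Finset ℕ)) : Prop :=
  ∃ ls : List (List ℕ), l = ls.flatten ∧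
    List.Forall₂ (fun (xs : List ℕ) (B : Finset ℕ) => xs.Nodup ∧ ∀ x : ℕ, x ∈ xs ↔ x ∈ B)
      ls P

/-- Equivalence of ordered set partitions relative to an equivalence `E` on permutations:
every permutation in one is `E`-equivalent to some permutation in the other, and vice
versa. -/
def OSPEquivRel (E : List ℕ → List ℕ → Prop) (P Q : List (Finset ℕ)) : Prop :=
  (∀ l, Linearizes l P → ∃ m, Linearizes m Q ∧ E l m) ∧
  (∀ m, Linearizes m Q → ∃ l, Linearizes l P ∧ E l m)

/-- Equivalence of ordered set partitions of `[n]` under `≡`. -/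
def OSPEquiv (𝓕 : Set Fence) : List (Finset ℕ) → List (Finset ℕ) → Prop :=
  OSPEquivRel (PermEquiv 𝓕)

/-- Equivalence of ordered set partitions of `[n−1]` under the restriction `≡*`. -/
def OSPEquivStar (n : ℕ) (𝓕 : Set Fence) : List (Finset ℕ) → List (Finset ℕ) → Prop :=
  OSPEquivRel (PermEquivStar n 𝓕)

/-- `P` is stable (w.r.t. the ground set `S` and the congruence `≡` given by `𝓕`):
every ordered set partition of `S` equivalent to `P` has at most as many blocks. -/
def StableOSP (𝓕 : Set Fence) (S : Finset ℕ) (P : List (Finset ℕ)) : Prop :=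
  ∀ Q, IsOSP S Q → OSPEquiv 𝓕 P Q → Q.length ≤ P.length

/-- `P` is stable under the restriction `≡*` (as an ordered set partition of `[n−1]`). -/
def StableOSPStar (n : ℕ) (𝓕 : Set Fence) (P : List (Finset ℕ)) : Prop :=
  ∀ Q, IsOSP (Finset.Icc 1 (n - 1)) Q → OSPEquivStar n 𝓕 P Q → Q.length ≤ P.length

/-- The union of a list of blocks. -/
def blocksUnion (L : List (Finset ℕ)) : Finset ℕ := L.foldr (· ∪ ·) ∅

/-!
For any `D`, splitting every block of an ordered set partition of `[n]` into its parts outside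
and inside `D` (`splitAlong D`) respects `≡`. Within a block the split is reached by adjacent
swaps `x y ↦ y x` with `x ∈ D`, `y ∉ D`, and such a swap is an `≡`-step as soon as some
permutation equivalent to the current one has `y` before `x`: otherwise the fence of `{x, y}`
whose `L` is the part of `]x, y[` to the left of the pair is not in `𝓕`, and since `𝓕` is a
downset, no move of `𝓕` can reverse `x, y` while keeping the elements of `]x, y[` on the sides
prescribed by that fence. The equivalence of the two partitions supplies such a permutation.

Now let `Q ≡ F″` have more blocks than `F″`. Splitting along `B` and along `A` gives partitions
equivalent to `F` and `F′`; by stability of `F` and `F′` neither split adds a block to `Q`, so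
both leave `Q` unchanged, and `F ≡ Q ≡ F′`.
-/

open Finset
open scoped List

namespace List

variable {α : Type*} {l u v w : List α} {x y : α}

theorem pair_sublist_iff : [x, y] <+ l ↔ ∃ r₁ r₂, l = r₁ ++ r₂ ∧ x ∈ r₁ ∧ y ∈ r₂ := by
  rw [cons_sublist_iff]; simp only [singleton_sublist]

theorem pair_sublist_append (hx : x ∈ u) (hy : y ∈ v) : [x, y] <+ u ++ v :=
  pair_sublist_iff.2 ⟨u, v, rfl, hx, hy⟩

theorem Nodup.not_pair_sublist (hl : l.Nodup) (h : [x, y] <+ l) : ¬ [y, x] <+ l := by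
  induction l with
  | nil => simp at h
  | cons c l ih =>
    rw [nodup_cons] at hl
    intro h'
    rcases sublist_cons_iff.1 h with ht | ⟨r, ⟨rfl, rfl⟩, hr⟩ <;>
      rcases sublist_cons_iff.1 h' with ht' | ⟨r', ⟨rfl, rfl⟩, hr'⟩
    · exact ih hl.2 ht ht'
    · exact hl.1 (ht.subset (mem_cons_of_mem x (mem_singleton_self y)))
    · exact hl.1 (ht'.subset (mem_cons_of_mem y (mem_singleton_self x)))
    · simpa using h.nodup (hl.2.cons hl.1)

theorem pair_sublist_or_pair_sublist (hx : x ∈ l) (hy : y ∈ l) (hxy : x ≠ y) :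
    [x, y] <+ l ∨ [y, x] <+ l := by
  induction l with
  | nil => simp at hx
  | cons c l ih =>
    rcases mem_cons.1 hx with rfl | hxl
    · exact Or.inl ((singleton_sublist.2 ((mem_cons.1 hy).resolve_left hxy.symm)).cons_cons x)
    rcases mem_cons.1 hy with rfl | hyl
    · exact Or.inr ((singleton_sublist.2 hxl).cons_cons y)
    exact (ih hxl hyl).imp (·.cons c) (·.cons c)

theorem Nodup.ne_of_append_cons_cons (h : (u ++ x :: y :: w).Nodup) : x ≠ y := by
  rintro rfl
  exact (nodup_cons.1 (nodup_append.1 h).2.1).1 mem_cons_self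

theorem pair_sublist_swap {s t : α} (hst : ¬ (x = s ∧ y = t)) (h : [x, y] <+ u ++ s :: t :: w) :
    [x, y] <+ u ++ t :: s :: w := by
  induction u with
  | nil =>
    simp only [nil_append, sublist_cons_iff, cons.injEq] at h ⊢
    grind
  | cons c u ih =>
    simp only [cons_append, sublist_cons_iff] at h ⊢
    rcases h with h | ⟨r, ⟨rfl, rfl⟩, hr⟩
    · exact Or.inl (ih h)
    · exact Or.inr ⟨[y], rfl, by simp_all; tauto⟩

theorem exists_append_or_exists_adjacent (p : α → Prop) (l : List α) :
    (∃ as bs, l = as ++ bs ∧ (∀ a ∈ as, ¬ p a) ∧ ∀ b ∈ bs, p b) ∨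
      ∃ u x y w, l = u ++ x :: y :: w ∧ p x ∧ ¬ p y := by
  induction l with
  | nil => exact Or.inl ⟨[], [], rfl, by simp, by simp⟩
  | cons c l ih =>
    rcases ih with ⟨as, bs, rfl, has, hbs⟩ | ⟨u, x, y, w, rfl, hx, hy⟩
    · by_cases hc : p c
      · cases as with
        | nil => exact Or.inl ⟨[], c :: bs, rfl, by simp, forall_mem_cons.2 ⟨hc, hbs⟩⟩
        | cons a as => exact Or.inr ⟨[], c, a, as ++ bs, rfl, hc, has a (by simp)⟩
      · exact Or.inl ⟨c :: as, bs, rfl, forall_mem_cons.2 ⟨hc, has⟩, hbs⟩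
    · exact Or.inr ⟨c :: u, x, y, w, rfl, hx, hy⟩

end List

namespace Fence

variable {n : ℕ} {𝓕 : Set Fence} {f g : Fence} {l l₁ l₂ u w : List ℕ} {s t x y : ℕ}

def Flanks (g : Fence) (l : List ℕ) : Prop :=
  (∀ c ∈ g.L, [c, g.a] <+ l ∧ [c, g.b] <+ l) ∧
    ∀ c ∈ Ioo g.a g.b, c ∉ g.L → [g.a, c] <+ l ∧ [g.b, c] <+ l

theorem flanks_append (hst : (s = g.a ∧ t = g.b) ∨ (s = g.b ∧ t = g.a))
    (hu : ∀ c ∈ g.L, c ∈ u) (hw : ∀ c ∈ Ioo g.a g.b, c ∉ g.L → c ∈ w) :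
    g.Flanks (u ++ s :: t :: w) := by
  have ha : g.a ∈ s :: t :: w := by rcases hst with ⟨rfl, -⟩ | ⟨-, rfl⟩ <;> simp
  have hb : g.b ∈ s :: t :: w := by rcases hst with ⟨-, rfl⟩ | ⟨rfl, -⟩ <;> simp
  have hab : g.a ∈ u ++ [s, t] ∧ g.b ∈ u ++ [s, t] := by
    rcases hst with ⟨rfl, rfl⟩ | ⟨rfl, rfl⟩ <;> simp
  refine ⟨fun c hc => ⟨List.pair_sublist_append (hu c hc) ha,
    List.pair_sublist_append (hu c hc) hb⟩, fun c hc hcL => ?_⟩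
  have e : u ++ s :: t :: w = (u ++ [s, t]) ++ w := by simp
  rw [e]
  exact ⟨List.pair_sublist_append hab.1 (hw c hc hcL),
    List.pair_sublist_append hab.2 (hw c hc hcL)⟩

theorem _root_.FenceRel.symm (h : FenceRel f l₁ l₂) : FenceRel f l₂ l₁ := by
  obtain ⟨u, w, h | h, hu, hw⟩ := h
  exacts [⟨u, w, Or.inr h.symm, hu, hw⟩, ⟨u, w, Or.inl h.symm, hu, hw⟩]

theorem _root_.FenceRel.perm (h : FenceRel f l₁ l₂) : l₁.Perm l₂ := by
  obtain ⟨u, w, ⟨rfl, rfl⟩ | ⟨rfl, rfl⟩, -, -⟩ := h <;>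
    exact (List.Perm.swap _ _ w).append_left u

theorem _root_.FenceRel.flanks (h : FenceRel f l₁ l₂) : f.Flanks l₁ := by
  obtain ⟨u, w, ⟨rfl, -⟩ | ⟨rfl, -⟩, hu, hw⟩ := h
  exacts [flanks_append (Or.inl ⟨rfl, rfl⟩) hu hw, flanks_append (Or.inr ⟨rfl, rfl⟩) hu hw]

/-- An element on the wrong side would stand both before and after the shared endpoint. -/
theorem forces_of_flanks (hl : l.Nodup) (hf : f.Flanks l) (hg : g.Flanks l)
    (hfL : f.L ⊆ Ioo f.a f.b) (ha : g.a ≤ f.a) (hb : f.b ≤ g.b)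
    (hshared : f.a = g.a ∨ f.b = g.b) : g.Forces f := by
  refine ⟨ha, hb, ?_⟩
  ext d
  rw [mem_inter]
  constructor
  · rintro ⟨hdg, hdf⟩
    by_contra hd
    have h₁ := hf.2 d hdf hd
    have h₂ := hg.1 d hdg
    rcases hshared with e | e <;> rw [e] at h₁
    exacts [hl.not_pair_sublist h₁.1 h₂.1, hl.not_pair_sublist h₁.2 h₂.2]
  · intro hdf
    have hdf' := mem_Ioo.1 (hfL hdf)
    refine ⟨?_, hfL hdf⟩
    by_contra hd
    have h₁ := hf.1 d hdf
    have h₂ := hg.2 d (mem_Ioo.2 ⟨by omega, by omega⟩) hd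
    rcases hshared with e | e <;> rw [e] at h₁
    exacts [hl.not_pair_sublist h₁.1 h₂.1, hl.not_pair_sublist h₁.2 h₂.2]

theorem pair_sublist_and_flanks_swap_iff (hgv : g.Valid n) (hf : f.a < f.b)
    (hst : (s = f.a ∧ t = f.b) ∨ (s = f.b ∧ t = f.a))
    (hfar : ¬ (g.a ≤ f.a ∧ f.b ≤ g.b ∧ (f.a = g.a ∨ f.b = g.b)))
    (hxy : (x = g.a ∧ y = g.b) ∨ (x = g.b ∧ y = g.a)) :
    ([x, y] <+ u ++ s :: t :: w ∧ g.Flanks (u ++ s :: t :: w)) ↔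
      ([x, y] <+ u ++ t :: s :: w ∧ g.Flanks (u ++ t :: s :: w)) := by
  have swap_iff : ∀ p q, g.a ≤ p → p ≤ g.b → g.a ≤ q → q ≤ g.b →
      (p = g.a ∨ p = g.b ∨ q = g.a ∨ q = g.b) →
      ([p, q] <+ u ++ s :: t :: w ↔ [p, q] <+ u ++ t :: s :: w) := fun p q _ _ _ _ _ =>
    ⟨List.pair_sublist_swap (by omega), List.pair_sublist_swap (by omega)⟩
  have hL : ∀ c ∈ g.L, g.a < c ∧ c < g.b := fun c hc => mem_Ioo.1 (hgv.2.2.2 hc)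
  have := hgv.2.1
  refine and_congr (swap_iff x y (by omega) (by omega) (by omega) (by omega) (by omega))
    (and_congr (forall₂_congr fun c hc => ?_) (forall₂_congr fun c hc => ?_))
  · have := hL c hc
    exact and_congr (swap_iff c g.a (by omega) (by omega) (by omega) (by omega) (by omega))
      (swap_iff c g.b (by omega) (by omega) (by omega) (by omega) (by omega))
  · have := mem_Ioo.1 hc
    exact imp_congr_right fun _ => and_congr
      (swap_iff g.a c (by omega) (by omega) (by omega) (by omega) (by omega))
      (swap_iff g.b c (by omega) (by omega) (by omega) (by omega) (by omega))

/-- Only a move of a fence `f` with `g.a ≤ f.a < f.b ≤ g.b` sharing an endpoint with `g` could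
change this; but a permutation flanked by both `f` and `g` makes `g` force `f`, so `g ∈ 𝓕`. -/
theorem nodup_and_flanks_iff_of_fenceRel (hdown : IsFenceDownset n 𝓕) (hf : f ∈ 𝓕)
    (hgv : g.Valid n) (hg : g ∉ 𝓕) (hxy : (x = g.a ∧ y = g.b) ∨ (x = g.b ∧ y = g.a))
    (h : FenceRel f l₁ l₂) :
    (l₁.Nodup ∧ [x, y] <+ l₁ ∧ g.Flanks l₁) ↔ (l₂.Nodup ∧ [x, y] <+ l₂ ∧ g.Flanks l₂) := by
  have hfv := hdown.1 f hf
  rw [h.perm.nodup_iff]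
  refine and_congr_right fun hn₂ => ?_
  by_cases hnear : g.a ≤ f.a ∧ f.b ≤ g.b ∧ (f.a = g.a ∨ f.b = g.b)
  · have hn₁ := h.perm.nodup_iff.2 hn₂
    have forces {l : List ℕ} (hl : l.Nodup) (hfl : f.Flanks l) (hgl : g.Flanks l) : g ∈ 𝓕 :=
      hdown.2 f hf g hgv (forces_of_flanks hl hfl hgl hfv.2.2.2 hnear.1 hnear.2.1 hnear.2.2)
    exact iff_of_false (fun h₁ => hg (forces hn₁ h.flanks h₁.2))
      (fun h₂ => hg (forces hn₂ h.symm.flanks h₂.2))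
  · obtain ⟨u, w, ⟨rfl, rfl⟩ | ⟨rfl, rfl⟩, -, -⟩ := h
    exacts [pair_sublist_and_flanks_swap_iff hgv hfv.2.1 (Or.inl ⟨rfl, rfl⟩) hnear hxy,
      pair_sublist_and_flanks_swap_iff hgv hfv.2.1 (Or.inr ⟨rfl, rfl⟩) hnear hxy]

theorem nodup_and_flanks_iff_of_permEquiv (hdown : IsFenceDownset n 𝓕) (hgv : g.Valid n)
    (hg : g ∉ 𝓕) (hxy : (x = g.a ∧ y = g.b) ∨ (x = g.b ∧ y = g.a)) (h : PermEquiv 𝓕 l₁ l₂) :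
    (l₁.Nodup ∧ [x, y] <+ l₁ ∧ g.Flanks l₁) ↔ (l₂.Nodup ∧ [x, y] <+ l₂ ∧ g.Flanks l₂) := by
  induction h with
  | rel _ _ h =>
    obtain ⟨f, hf, h⟩ := h
    exact nodup_and_flanks_iff_of_fenceRel hdown hf hgv hg hxy h
  | refl => rfl
  | symm _ _ _ ih => exact ih.symm
  | trans _ _ _ _ _ ih₁ ih₂ => exact ih₁.trans ih₂

end Fence

/-- Otherwise the fence `g` of the pair, with `g.L` the part of `]x, y[` to its left, is not in
`𝓕`, and the order of `x, y` could never change. -/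
theorem permEquiv_swap_of_reversed {n : ℕ} {𝓕 : Set Fence} (hdown : IsFenceDownset n 𝓕)
    {u w z : List ℕ} {x y : ℕ} (hn : (u ++ x :: y :: w).Nodup)
    (hsupp : ∀ c, c ∈ u ++ x :: y :: w ↔ c ∈ Icc 1 n)
    (hz : PermEquiv 𝓕 (u ++ x :: y :: w) z) (hyx : [y, x] <+ z) :
    PermEquiv 𝓕 (u ++ x :: y :: w) (u ++ y :: x :: w) := by
  classical
  have hxy : x ≠ y := hn.ne_of_append_cons_cons
  have hx := mem_Icc.1 ((hsupp x).1 (by simp))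
  have hy := mem_Icc.1 ((hsupp y).1 (by simp))
  set g : Fence := ⟨min x y, max x y, (Ioo (min x y) (max x y)).filter (· ∈ u)⟩
  have hgxy : (x = g.a ∧ y = g.b) ∨ (x = g.b ∧ y = g.a) := by simp only [g]; omega
  have hu : ∀ c ∈ g.L, c ∈ u := fun c hc => (mem_filter.1 hc).2
  have hw : ∀ c ∈ Ioo g.a g.b, c ∉ g.L → c ∈ w := by
    intro c hc hcL
    have hcu : c ∉ u := fun h => hcL (mem_filter.2 ⟨hc, h⟩)
    have hc' := mem_Ioo.1 hc
    simp only [g] at hc'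
    have hcn := (hsupp c).2 (mem_Icc.2 (by omega))
    simp only [List.mem_append, List.mem_cons] at hcn
    rcases hcn with h | rfl | rfl | h
    · exact absurd h hcu
    · omega
    · omega
    · exact h
  by_cases hg : g ∈ 𝓕
  · refine Relation.EqvGen.rel _ _ ⟨g, hg, u, w, ?_, hu, hw⟩
    rcases hgxy with ⟨hxa, hyb⟩ | ⟨hxb, hya⟩
    · exact Or.inl ⟨by rw [hxa, hyb], by rw [hxa, hyb]⟩
    · exact Or.inr ⟨by rw [hxb, hya], by rw [hxb, hya]⟩
  · have hgv : g.Valid n := by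
      refine ⟨?_, ?_, ?_, filter_subset _ _⟩ <;> simp only [g] <;> omega
    have hxy_before : [x, y] <+ u ++ x :: y :: w :=
      List.pair_sublist_iff.2 ⟨u ++ [x], y :: w, by simp, by simp, by simp⟩
    have hinv := (Fence.nodup_and_flanks_iff_of_permEquiv hdown hgv hg hgxy hz).1
      ⟨hn, hxy_before, Fence.flanks_append hgxy hu hw⟩
    exact absurd hyx (hinv.1.not_pair_sublist hinv.2.1)

def Enumerates (xs : List ℕ) (B : Finset ℕ) : Prop := xs.Nodup ∧ ∀ x, x ∈ xs ↔ x ∈ B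

section Linearizes

variable {l xs ys : List ℕ} {B C : Finset ℕ} {P P' : List (Finset ℕ)} {x y : ℕ}

theorem Enumerates.append (hxs : Enumerates xs B) (hys : Enumerates ys C) (hBC : Disjoint B C) :
    Enumerates (xs ++ ys) (B ∪ C) := by
  refine ⟨hxs.1.append hys.1 fun a ha ha' => ?_, fun a => ?_⟩
  · exact disjoint_left.1 hBC ((hxs.2 a).1 ha) ((hys.2 a).1 ha')
  · rw [List.mem_append, hxs.2, hys.2, mem_union]

theorem Enumerates.perm (hxs : Enumerates xs B) (h : xs.Perm ys) : Enumerates ys B :=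
  ⟨h.nodup_iff.1 hxs.1, fun a => h.mem_iff.symm.trans (hxs.2 a)⟩

theorem linearizes_nil : Linearizes l [] ↔ l = [] := by
  simp [Linearizes]

theorem linearizes_cons :
    Linearizes l (B :: P) ↔ ∃ xs l', l = xs ++ l' ∧ Enumerates xs B ∧ Linearizes l' P := by
  simp only [Linearizes, List.forall₂_cons_right_iff]
  constructor
  · rintro ⟨_, rfl, xs, ls, hxs, hls, rfl⟩
    exact ⟨xs, ls.flatten, by simp, hxs, ls, rfl, hls⟩
  · rintro ⟨xs, _, rfl, hxs, ls, rfl, hls⟩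
    exact ⟨xs :: ls, by simp, xs, ls, hxs, hls, rfl⟩

theorem linearizes_singleton : Linearizes l [B] ↔ Enumerates l B := by
  simp [linearizes_cons, linearizes_nil]

theorem linearizes_append :
    Linearizes l (P ++ P') ↔ ∃ l₁ l₂, l = l₁ ++ l₂ ∧ Linearizes l₁ P ∧ Linearizes l₂ P' := by
  induction P generalizing l with
  | nil => simp [linearizes_nil]
  | cons B P ih =>
    simp only [List.cons_append, linearizes_cons, ih]
    constructor
    · rintro ⟨xs, _, rfl, hxs, l₁, l₂, rfl, h₁, h₂⟩
      exact ⟨xs ++ l₁, l₂, by simp, ⟨xs, l₁, rfl, hxs, h₁⟩, h₂⟩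
    · rintro ⟨_, l₂, rfl, ⟨xs, l₁, rfl, hxs, h₁⟩, h₂⟩
      exact ⟨xs, l₁ ++ l₂, by simp, hxs, l₁, l₂, rfl, h₁, h₂⟩

theorem Linearizes.mem_iff (hl : Linearizes l P) : x ∈ l ↔ ∃ B ∈ P, x ∈ B := by
  induction P generalizing l with
  | nil => simp [linearizes_nil.1 hl]
  | cons B P ih =>
    obtain ⟨xs, l', rfl, hxs, hl'⟩ := linearizes_cons.1 hl
    simp [hxs.2, ih hl']

theorem Linearizes.nodup (hl : Linearizes l P) (hP : P.Pairwise Disjoint) : l.Nodup := by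
  induction P generalizing l with
  | nil => simp [linearizes_nil.1 hl]
  | cons B P ih =>
    obtain ⟨xs, l', rfl, hxs, hl'⟩ := linearizes_cons.1 hl
    rw [List.pairwise_cons] at hP
    refine hxs.1.append (ih hl' hP.2) fun a ha ha' => ?_
    obtain ⟨C, hC, haC⟩ := hl'.mem_iff.1 ha'
    exact disjoint_left.1 (hP.1 C hC) ((hxs.2 a).1 ha) haC

theorem Linearizes.pair_sublist (hl : Linearizes l P) (hP : [B, C] <+ P) (hx : x ∈ B)
    (hy : y ∈ C) : [x, y] <+ l := by
  obtain ⟨P₁, P₂, rfl, hB, hC⟩ := List.pair_sublist_iff.1 hP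
  obtain ⟨l₁, l₂, rfl, h₁, h₂⟩ := linearizes_append.1 hl
  exact List.pair_sublist_append (h₁.mem_iff.2 ⟨B, hB, hx⟩) (h₂.mem_iff.2 ⟨C, hC, hy⟩)

end Linearizes

def splitBlock (D C : Finset ℕ) : List (Finset ℕ) :=
  if (C \ D).Nonempty ∧ (C ∩ D).Nonempty then [C \ D, C ∩ D] else [C]

def splitAlong (D : Finset ℕ) (P : List (Finset ℕ)) : List (Finset ℕ) := P.flatMap (splitBlock D)

section splitAlong

variable {D C : Finset ℕ} {P : List (Finset ℕ)} {l : List ℕ} {x y : ℕ}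

theorem splitBlock_of_nonempty (h₁ : (C \ D).Nonempty) (h₂ : (C ∩ D).Nonempty) :
    splitBlock D C = [C \ D, C ∩ D] :=
  if_pos ⟨h₁, h₂⟩

theorem splitBlock_of_disjoint (h : Disjoint C D) : splitBlock D C = [C] :=
  if_neg fun h' => not_nonempty_iff_eq_empty.2 (disjoint_iff_inter_eq_empty.1 h) h'.2

theorem splitAlong_of_disjoint (h : ∀ C ∈ P, Disjoint C D) : splitAlong D P = P := by
  induction P with
  | nil => rfl
  | cons C P ih =>
    simp only [List.forall_mem_cons] at h
    change splitBlock D C ++ splitAlong D P = C :: P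
    rw [splitBlock_of_disjoint h.1, ih h.2]
    rfl

theorem splitAlong_eq_or_length_lt : splitAlong D P = P ∨ P.length < (splitAlong D P).length := by
  induction P with
  | nil => exact Or.inl rfl
  | cons C P ih =>
    change splitBlock D C ++ splitAlong D P = C :: P ∨
      P.length + 1 < (splitBlock D C ++ splitAlong D P).length
    unfold splitBlock
    rcases ih with ih | ih <;> split_ifs <;> simp [ih]; omega

theorem subset_of_mem_splitBlock {X : Finset ℕ} (hX : X ∈ splitBlock D C) : X ⊆ C := by
  unfold splitBlock at hX
  split_ifs at hX <;> simp only [List.mem_cons, List.not_mem_nil, or_false] at hX <;>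
    rcases hX with rfl | rfl <;> simp

theorem nonempty_of_mem_splitBlock {X : Finset ℕ} (hC : C.Nonempty) (hX : X ∈ splitBlock D C) :
    X.Nonempty := by
  unfold splitBlock at hX
  split_ifs at hX with h <;> simp only [List.mem_cons, List.not_mem_nil, or_false] at hX
  · rcases hX with rfl | rfl
    exacts [h.1, h.2]
  · rwa [hX]

theorem exists_mem_splitBlock (hx : x ∈ C) : ∃ X ∈ splitBlock D C, x ∈ X := by
  unfold splitBlock
  split_ifs
  · by_cases hxD : x ∈ D
    · exact ⟨C ∩ D, by simp, mem_inter.2 ⟨hx, hxD⟩⟩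
    · exact ⟨C \ D, by simp, mem_sdiff.2 ⟨hx, hxD⟩⟩
  · exact ⟨C, by simp, hx⟩

theorem pairwise_disjoint_splitBlock : (splitBlock D C).Pairwise Disjoint := by
  unfold splitBlock
  split_ifs <;> simp [disjoint_sdiff_inter]

theorem IsOSP.splitAlong {S : Finset ℕ} (hP : IsOSP S P) : IsOSP S (splitAlong D P) := by
  obtain ⟨hne, hdisj, hcover⟩ := hP
  refine ⟨fun X hX => ?_, ?_, fun x => ?_⟩
  · obtain ⟨C, hC, hX⟩ := List.mem_flatMap.1 hX
    exact nonempty_of_mem_splitBlock (hne C hC) hX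
  · refine List.pairwise_flatMap.2 ⟨fun C _ => pairwise_disjoint_splitBlock, ?_⟩
    exact hdisj.imp fun h X hX Y hY =>
      (h.mono_left (subset_of_mem_splitBlock hX)).mono_right (subset_of_mem_splitBlock hY)
  · rw [hcover]
    constructor
    · rintro ⟨C, hC, hx⟩
      obtain ⟨X, hX, hxX⟩ := exists_mem_splitBlock (D := D) hx
      exact ⟨X, List.mem_flatMap.2 ⟨C, hC, hX⟩, hxX⟩
    · rintro ⟨X, hX, hxX⟩
      obtain ⟨C, hC, hX⟩ := List.mem_flatMap.1 hX
      exact ⟨C, hC, subset_of_mem_splitBlock hX hxX⟩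

theorem enumerates_of_linearizes_splitBlock (hl : Linearizes l (splitBlock D C)) :
    Enumerates l C := by
  unfold splitBlock at hl
  split_ifs at hl
  · obtain ⟨xs, ys, rfl, hxs, hys⟩ := linearizes_cons.1 hl
    simpa [sdiff_union_inter] using
      hxs.append (linearizes_singleton.1 hys) (disjoint_sdiff_inter C D)
  · exact linearizes_singleton.1 hl

theorem Linearizes.of_splitAlong (hl : Linearizes l (splitAlong D P)) : Linearizes l P := by
  induction P generalizing l with
  | nil => exact hl
  | cons C P ih =>
    obtain ⟨l₁, l₂, rfl, h₁, h₂⟩ := linearizes_append.1 hl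
    exact linearizes_cons.2 ⟨l₁, l₂, rfl, enumerates_of_linearizes_splitBlock h₁, ih h₂⟩

theorem Linearizes.pair_sublist_of_splitAlong (hl : Linearizes l (splitAlong D P)) (hC : C ∈ P)
    (hy : y ∈ C \ D) (hx : x ∈ C ∩ D) : [y, x] <+ l := by
  have hblock : splitBlock D C = [C \ D, C ∩ D] := splitBlock_of_nonempty ⟨y, hy⟩ ⟨x, hx⟩
  refine hl.pair_sublist ?_ hy hx
  rw [← hblock]
  exact List.sublist_flatten_of_mem (List.mem_map_of_mem hC)

theorem linearizes_splitBlock {as bs : List ℕ} (h : Enumerates (as ++ bs) C)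
    (has : ∀ a ∈ as, a ∉ D) (hbs : ∀ b ∈ bs, b ∈ D) : Linearizes (as ++ bs) (splitBlock D C) := by
  unfold splitBlock
  split_ifs
  · have hn := List.nodup_append.1 h.1
    refine linearizes_cons.2 ⟨as, bs, rfl, ⟨hn.1, fun a => ?_⟩,
      linearizes_singleton.2 ⟨hn.2.1, fun b => ?_⟩⟩
    · have := h.2 a
      grind
    · have := h.2 b
      grind
  · exact linearizes_singleton.2 h

theorem Linearizes.splitAlong_or_exists_swap (hl : Linearizes l P) :
    Linearizes l (splitAlong D P) ∨ ∃ u x y w, l = u ++ x :: y :: w ∧ x ∈ D ∧ y ∉ D ∧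
      Linearizes (u ++ y :: x :: w) P := by
  induction P generalizing l with
  | nil => exact Or.inl hl
  | cons C P ih =>
    obtain ⟨xs, l', rfl, hxs, hl'⟩ := linearizes_cons.1 hl
    rcases List.exists_append_or_exists_adjacent (· ∈ D) xs with
      ⟨as, bs, rfl, has, hbs⟩ | ⟨u, x, y, w, rfl, hx, hy⟩
    · rcases ih hl' with hl' | ⟨u, x, y, w, rfl, hx, hy, hswap⟩
      · exact Or.inl (linearizes_append.2 ⟨_, _, rfl, linearizes_splitBlock hxs has hbs, hl'⟩)
      · refine Or.inr ⟨as ++ bs ++ u, x, y, w, by simp, hx, hy, ?_⟩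
        simpa using linearizes_cons.2 ⟨_, _, rfl, hxs, hswap⟩
    · refine Or.inr ⟨u, x, y, w ++ l', by simp, hx, hy, ?_⟩
      simpa using linearizes_cons.2
        ⟨_, _, rfl, hxs.perm ((List.Perm.swap y x w).append_left u), hl'⟩

end splitAlong

def inversions (D : Finset ℕ) : List ℕ → ℕ
  | [] => 0
  | x :: l => (if x ∈ D then l.countP (· ∉ D) else 0) + inversions D l

theorem inversions_swap_lt {D : Finset ℕ} {u w : List ℕ} {x y : ℕ} (hx : x ∈ D) (hy : y ∉ D) :
    inversions D (u ++ y :: x :: w) < inversions D (u ++ x :: y :: w) := by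
  induction u with
  | nil => simp [inversions, hx, hy]
  | cons c u ih =>
    have hperm := ((List.Perm.swap x y w).append_left u).countP_eq (fun a => decide (a ∉ D))
    simp only [List.cons_append, inversions, hperm]
    omega

theorem Linearizes.exists_splitAlong {D : Finset ℕ} {P : List (Finset ℕ)} {l : List ℕ}
    {S : List ℕ → Prop} (hl : Linearizes l P) (hS : S l)
    (hswap : ∀ u x y w, S (u ++ x :: y :: w) → x ∈ D → y ∉ D →
      Linearizes (u ++ x :: y :: w) P → Linearizes (u ++ y :: x :: w) P →
      S (u ++ y :: x :: w)) :
    ∃ m, Linearizes m (splitAlong D P) ∧ S m := by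
  induction h : inversions D l using Nat.strong_induction_on generalizing l with
  | _ k ih =>
    rcases hl.splitAlong_or_exists_swap (D := D) with hl' | ⟨u, x, y, w, rfl, hx, hy, hl'⟩
    · exact ⟨l, hl', hS⟩
    · exact ih _ (h ▸ inversions_swap_lt hx hy) hl' (hswap u x y w hS hx hy hl hl') rfl

section Equiv

variable {n : ℕ} {𝓕 : Set Fence} {S D : Finset ℕ} {P Q R : List (Finset ℕ)} {l l' m : List ℕ}
  {x y : ℕ}

theorem PermEquiv.symm (h : PermEquiv 𝓕 l m) : PermEquiv 𝓕 m l := Relation.EqvGen.symm _ _ h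

theorem PermEquiv.trans (h : PermEquiv 𝓕 l l') (h' : PermEquiv 𝓕 l' m) : PermEquiv 𝓕 l m :=
  Relation.EqvGen.trans _ _ _ h h'

theorem PermEquiv.perm (h : PermEquiv 𝓕 l m) : l.Perm m := by
  induction h with
  | rel _ _ h => obtain ⟨f, -, h⟩ := h; exact h.perm
  | refl => rfl
  | symm _ _ _ ih => exact ih.symm
  | trans _ _ _ _ _ ih₁ ih₂ => exact ih₁.trans ih₂

theorem OSPEquiv.symm (h : OSPEquiv 𝓕 P Q) : OSPEquiv 𝓕 Q P :=
  ⟨fun m hm => (h.2 m hm).imp fun _ hl => ⟨hl.1, hl.2.symm⟩,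
    fun l hl => (h.1 l hl).imp fun _ hm => ⟨hm.1, hm.2.symm⟩⟩

theorem OSPEquiv.trans (h : OSPEquiv 𝓕 P Q) (h' : OSPEquiv 𝓕 Q R) : OSPEquiv 𝓕 P R := by
  refine ⟨fun l hl => ?_, fun m hm => ?_⟩
  · obtain ⟨l', hl', hll'⟩ := h.1 l hl
    obtain ⟨m, hm, hl'm⟩ := h'.1 l' hl'
    exact ⟨m, hm, hll'.trans hl'm⟩
  · obtain ⟨l', hl', hl'm⟩ := h'.2 m hm
    obtain ⟨l, hl, hll'⟩ := h.2 l' hl'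
    exact ⟨l, hl, hll'.trans hl'm⟩

theorem Linearizes.mem_iff_of_isOSP (hP : IsOSP S P) (hl : Linearizes l P) : x ∈ l ↔ x ∈ S :=
  hl.mem_iff.trans (hP.2.2 x).symm

/-- `x` and `y` cannot share a block of `P`, whose split puts `y` first; so `x` lies in an
earlier block. -/
theorem Linearizes.pair_sublist_of_splitAlong_pair_sublist (hP : IsOSP S P)
    (hl : Linearizes l (splitAlong D P)) (hl' : Linearizes l' P) (hxy : [x, y] <+ l)
    (hx : x ∈ D) (hy : y ∉ D) : [x, y] <+ l' := by
  have hnd := hl.nodup hP.splitAlong.2.1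
  obtain ⟨Cx, hCx, hxC⟩ := hl.of_splitAlong.mem_iff.1 (hxy.subset (by simp : x ∈ [x, y]))
  obtain ⟨Cy, hCy, hyC⟩ := hl.of_splitAlong.mem_iff.1 (hxy.subset (by simp : y ∈ [x, y]))
  by_cases hC : Cx = Cy
  · subst hC
    exact absurd (hl.pair_sublist_of_splitAlong hCx (mem_sdiff.2 ⟨hyC, hy⟩)
      (mem_inter.2 ⟨hxC, hx⟩)) (hnd.not_pair_sublist hxy)
  · rcases List.pair_sublist_or_pair_sublist hCx hCy hC with h | h
    · exact hl'.pair_sublist h hxC hyC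
    · exact absurd (hl.of_splitAlong.pair_sublist h hyC hxC) (hnd.not_pair_sublist hxy)

theorem exists_permEquiv_linearizes_splitAlong (hdown : IsFenceDownset n 𝓕)
    (hP : IsOSP (Icc 1 n) P) (hQ : IsOSP (Icc 1 n) Q) (hPQ : OSPEquiv 𝓕 P Q)
    (hl : Linearizes l (splitAlong D P)) :
    ∃ m, Linearizes m (splitAlong D Q) ∧ PermEquiv 𝓕 l m := by
  obtain ⟨m, hm, hlm⟩ := hPQ.1 l hl.of_splitAlong
  refine hm.exists_splitAlong hlm fun u x y w hlm hx hy hm hm' => hlm.trans ?_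
  have hmn := hm.nodup hQ.2.1
  have hxy : x ≠ y := hmn.ne_of_append_cons_cons
  have hxl : x ∈ l := hlm.perm.mem_iff.2 (by simp)
  have hyl : y ∈ l := hlm.perm.mem_iff.2 (by simp)
  rcases List.pair_sublist_or_pair_sublist hxl hyl hxy with h | h
  · obtain ⟨l', hl', hl'm'⟩ := hPQ.2 _ hm'
    have h' := hl.pair_sublist_of_splitAlong_pair_sublist hP hl' h hx hy
    exact (permEquiv_swap_of_reversed hdown (hm'.nodup hQ.2.1)
      (fun _ => hm'.mem_iff_of_isOSP hQ) hl'm'.symm h').symm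
  · exact permEquiv_swap_of_reversed hdown hmn (fun _ => hm.mem_iff_of_isOSP hQ) hlm.symm h

theorem OSPEquiv.splitAlong (hdown : IsFenceDownset n 𝓕) (hP : IsOSP (Icc 1 n) P)
    (hQ : IsOSP (Icc 1 n) Q) (hPQ : OSPEquiv 𝓕 P Q) :
    OSPEquiv 𝓕 (splitAlong D P) (splitAlong D Q) :=
  ⟨fun _ hl => exists_permEquiv_linearizes_splitAlong hdown hP hQ hPQ hl,
    fun _ hm => (exists_permEquiv_linearizes_splitAlong hdown hQ hP hPQ.symm hm).imp
      fun _ h => ⟨h.1, h.2.symm⟩⟩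

end Equiv

section Merge

variable {S A B D W : Finset ℕ} {L R : List (Finset ℕ)}

theorem IsOSP.merge (h : IsOSP S (L ++ A :: B :: R)) : IsOSP S (L ++ (A ∪ B) :: R) := by
  obtain ⟨hne, hdisj, hcover⟩ := h
  simp only [List.mem_append, List.mem_cons] at hne hcover
  refine ⟨?_, ?_, fun x => ?_⟩
  · simp only [List.mem_append, List.mem_cons]
    rintro C (hC | rfl | hC)
    exacts [hne C (Or.inl hC), (hne A (by simp)).mono subset_union_left, hne C (by simp [hC])]
  · simp only [List.pairwise_append, List.pairwise_cons, List.forall_mem_cons,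
      disjoint_union_left, disjoint_union_right, forall_and] at hdisj ⊢
    tauto
  · rw [hcover]
    simp only [List.mem_append, List.mem_cons]
    grind

theorem IsOSP.perm {P Q : List (Finset ℕ)} (h : IsOSP S P) (hPQ : P.Perm Q) : IsOSP S Q :=
  ⟨fun C hC => h.1 C (hPQ.mem_iff.2 hC), hPQ.pairwise h.2.1 fun h => h.symm,
    fun x => (h.2.2 x).trans (by simp only [hPQ.mem_iff])⟩

theorem splitAlong_append_cons (hL : ∀ C ∈ L, Disjoint C D) (hR : ∀ C ∈ R, Disjoint C D)
    (h₁ : (W \ D).Nonempty) (h₂ : (W ∩ D).Nonempty) :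
    splitAlong D (L ++ W :: R) = L ++ (W \ D) :: (W ∩ D) :: R := by
  have e : splitAlong D (L ++ W :: R) = splitAlong D L ++ splitBlock D W ++ splitAlong D R := by
    simp [splitAlong]
  rw [e, splitAlong_of_disjoint hL, splitAlong_of_disjoint hR, splitBlock_of_nonempty h₁ h₂]
  simp

theorem splitAlong_union_right (h : IsOSP S (L ++ A :: B :: R)) :
    splitAlong B (L ++ (A ∪ B) :: R) = L ++ A :: B :: R := by
  obtain ⟨hne, hdisj, -⟩ := h
  simp only [List.pairwise_append, List.pairwise_cons, List.forall_mem_cons] at hdisj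
  obtain ⟨-, ⟨⟨hAB, -⟩, hBR, -⟩, hLAB⟩ := hdisj
  rw [splitAlong_append_cons (fun C hC => (hLAB C hC).2.1) (fun C hC => (hBR C hC).symm),
    union_sdiff_cancel_right hAB, union_inter_cancel_right]
  · simpa [union_sdiff_cancel_right hAB] using hne A (by simp)
  · simpa using hne B (by simp)

theorem splitAlong_union_left (h : IsOSP S (L ++ A :: B :: R)) :
    splitAlong A (L ++ (A ∪ B) :: R) = L ++ B :: A :: R := by
  rw [union_comm]
  exact splitAlong_union_right (h.perm ((List.Perm.swap B A R).append_left L))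

end Merge

/-- If `F = L ++ A :: B :: R` is a stable ordered set partition of `[n]`, the transposed
partition `F′ = L ++ B :: A :: R` is stable, and `F` is not equivalent to `F′`, then the
merged partition `F″ = L ++ (A ∪ B) :: R` is stable. -/
theorem merge_stable_of_swap_not_equiv (n : ℕ) (𝓕 : Set Fence)
    (hdown : IsFenceDownset n 𝓕)
    (L R : List (Finset ℕ)) (A B : Finset ℕ)
    (hOSP : IsOSP (Finset.Icc 1 n) (L ++ A :: B :: R))
    (hstab : StableOSP 𝓕 (Finset.Icc 1 n) (L ++ A :: B :: R))
    (hstab' : StableOSP 𝓕 (Finset.Icc 1 n) (L ++ B :: A :: R))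
    (hnequiv : ¬ OSPEquiv 𝓕 (L ++ A :: B :: R) (L ++ B :: A :: R)) :
    StableOSP 𝓕 (Finset.Icc 1 n) (L ++ (A ∪ B) :: R) := by
  intro Q hQ hequiv
  by_contra hlen
  have hsplitB := hequiv.splitAlong (D := B) hdown hOSP.merge hQ
  have hsplitA := hequiv.splitAlong (D := A) hdown hOSP.merge hQ
  rw [splitAlong_union_right hOSP] at hsplitB
  rw [splitAlong_union_left hOSP] at hsplitA
  have hlenB := hstab _ hQ.splitAlong hsplitB
  have hlenA := hstab' _ hQ.splitAlong hsplitA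
  simp only [List.length_append, List.length_cons] at hlen hlenA hlenB
  have hQB : splitAlong B Q = Q := splitAlong_eq_or_length_lt.resolve_right (by omega)
  have hQA : splitAlong A Q = Q := splitAlong_eq_or_length_lt.resolve_right (by omega)
  rw [hQB] at hsplitB
  rw [hQA] at hsplitA
  exact hnequiv (hsplitB.trans hsplitA.symm)
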